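/- Let S be a finite set, let Z be a collection of subsets of S, and let r : Z → ℤ. There exists a matroid M on S whose collection of cyclic flats is exactly Z and whose rank function restricted to Z is r, if and only if the following hold: (Z0) Z, ordered by inclusion, is a lattice (Z is nonempty and any two members of Z have a least upper bound X ∨ Y and a greatest lower bound X ∧ Y among the members of Z, with respect to inclusion); (Z1) r(0_Z) = 0, where 0_Z is the least member of Z; (Z2) for all X, Y ∈ Z with X ⊊ Y, 0 < r(Y) − r(X) < |Y \ X|; (Z3) for all X, Y ∈ Z, r(X) + r(Y) ≥ r(X ∨ Y) + r(X ∧ Y) + |(X ∩ Y) \ (X ∧ Y)|. -/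

import Mathlib

namespace Matroid

variable {α β : Type*}

/-- A circuit of a matroid: a minimal dependent set. -/
def IsCircuit' (M : Matroid α) (C : Set α) : Prop :=
  M.Dep C ∧ ∀ D, D ⊂ C → M.Indep D

/-- A cyclic flat: a flat that is a (possibly empty) union of circuits. -/
def CyclicFlat (M : Matroid α) (X : Set α) : Prop :=
  M.IsFlat X ∧ ∀ e ∈ X, ∃ C, M.IsCircuit' C ∧ C ⊆ X ∧ e ∈ C

/-- The rank of a set: the maximum size of an independent subset. -/
noncomputable def rk (M : Matroid α) (X : Set α) : ℕ :=
  sSup {n | ∃ I, M.Indep I ∧ I ⊆ X ∧ I.ncard = n}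

/-- Deletion of a set from a matroid. -/
def del (M : Matroid α) (D : Set α) : Matroid α := M ↾ (M.E \ D)

/-- Contraction of a set in a matroid. -/
def con (M : Matroid α) (C : Set α) : Matroid α := (M✶ ↾ (M.E \ C))✶

/-- `N` is a minor of `M` if it is obtained from `M` by a contraction and a deletion. -/
def IsMinorOf (N M : Matroid α) : Prop := ∃ C D, N = (M.con C).del D

/-- Matroid isomorphism: a bijection of ground sets preserving independence. -/
def IsIsoTo (M : Matroid α) (N : Matroid β) : Prop :=
  ∃ e : M.E ≃ N.E, ∀ I : Set M.E,
    M.Indep (Subtype.val '' I) ↔ N.Indep (Subtype.val '' (e '' I))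

end Matroid

/-! In a matroid, the closure of `X ∪ Y` and the union of the circuits contained in `X ∩ Y` are
the join and the meet of two cyclic flats `X` and `Y`. (Z2) holds because `X` is a flat and every
element of `Y` is spanned by the rest of `Y`; (Z3) is submodularity of the rank, sharpened by the
elements of `X ∩ Y` outside the meet, which are coloops of `X ∩ Y`.

Conversely, (Z2) and (Z3) give `r F < r G + |F \ G|` for distinct `F, G ∈ Z`, so the function
`ρ A = min_{F ∈ Z} (r F + |A \ F|)` agrees with `r` on `Z`; it is a matroid rank function, its
submodularity being (Z3) applied to the minimizers for `A` and `B`. For a set `X` with minimizer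
`F`, cyclicity of `X` forces `X ⊆ F` and flatness forces `F ⊆ X`, so the cyclic flats of this
matroid are exactly the members of `Z`. -/

open Set

namespace Matroid

variable {α : Type*} {M : Matroid α} {X Y I F : Set α} {e : α}

section Rank

variable [M.RankFinite]

lemma IsBasis'.rk_eq_ncard (hI : M.IsBasis' I X) : M.rk X = I.ncard := by
  refine IsGreatest.csSup_eq ⟨⟨I, hI.indep, hI.subset, rfl⟩, ?_⟩
  rintro _ ⟨J, hJ, hJX, rfl⟩
  rw [← Nat.cast_le (α := ℕ∞), hJ.finite.cast_ncard_eq, hI.indep.finite.cast_ncard_eq,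
    hI.encard_eq_eRk]
  exact hJ.encard_le_eRk_of_subset hJX

lemma cast_rk_eq_eRk (X : Set α) : (M.rk X : ℕ∞) = M.eRk X := by
  obtain ⟨I, hI⟩ := M.exists_isBasis' X
  rw [hI.rk_eq_ncard, hI.indep.finite.cast_ncard_eq, hI.encard_eq_eRk]

lemma rk_mono (hXY : X ⊆ Y) : M.rk X ≤ M.rk Y := by
  rw [← Nat.cast_le (α := ℕ∞), cast_rk_eq_eRk, cast_rk_eq_eRk]
  exact M.eRk_mono hXY

@[simp] lemma rk_closure_eq (X : Set α) : M.rk (M.closure X) = M.rk X := by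
  rw [← Nat.cast_inj (R := ℕ∞), cast_rk_eq_eRk, cast_rk_eq_eRk, eRk_closure_eq]

lemma rk_inter_add_rk_union_le (X Y : Set α) :
    M.rk (X ∩ Y) + M.rk (X ∪ Y) ≤ M.rk X + M.rk Y := by
  rw [← Nat.cast_le (α := ℕ∞)]
  push_cast
  simp only [cast_rk_eq_eRk]
  exact M.eRk_inter_add_eRk_union_le X Y

lemma rk_union_le_rk_add_ncard (X : Set α) (hY : Y.Finite) :
    M.rk (X ∪ Y) ≤ M.rk X + Y.ncard := by
  rw [← Nat.cast_le (α := ℕ∞)]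
  push_cast
  simp only [cast_rk_eq_eRk, hY.cast_ncard_eq]
  exact M.eRk_union_le_eRk_add_encard X Y

lemma rk_insert_eq_add_one (he : e ∈ M.E \ M.closure X) : M.rk (insert e X) = M.rk X + 1 := by
  rw [← Nat.cast_inj (R := ℕ∞)]
  push_cast
  simp only [cast_rk_eq_eRk]
  exact eRk_insert_eq_add_one he

lemma mem_closure_iff_rk_insert_eq (he : e ∈ M.E) :
    e ∈ M.closure X ↔ M.rk (insert e X) = M.rk X := by
  refine ⟨fun hcl ↦ ?_, fun h ↦ by_contra fun hcl ↦ ?_⟩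
  · rw [← rk_closure_eq, closure_insert_eq_of_mem_closure hcl, rk_closure_eq]
  · rw [rk_insert_eq_add_one ⟨he, hcl⟩] at h
    omega

lemma mem_closure_sdiff_singleton_iff_rk_eq (heX : e ∈ X) (he : e ∈ M.E) :
    e ∈ M.closure (X \ {e}) ↔ M.rk (X \ {e}) = M.rk X := by
  rw [mem_closure_iff_rk_insert_eq he, insert_sdiff_singleton, insert_eq_of_mem heX, eq_comm]

lemma rk_loops : M.rk M.loops = 0 := by
  rw [← Nat.cast_inj (R := ℕ∞), cast_rk_eq_eRk, eRk_loops, Nat.cast_zero]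

end Rank

def Cyclic (M : Matroid α) (X : Set α) : Prop :=
  ∀ e ∈ X, ∃ C ⊆ X, M.IsCircuit C ∧ e ∈ C

def cyclicPart (M : Matroid α) (X : Set α) : Set α :=
  {e | ∃ C ⊆ X, M.IsCircuit C ∧ e ∈ C}

lemma isCircuit'_iff {C : Set α} : M.IsCircuit' C ↔ M.IsCircuit C := by
  rw [isCircuit_iff_forall_ssubset]
  rfl

lemma cyclicFlat_iff : M.CyclicFlat X ↔ M.IsFlat X ∧ M.Cyclic X := by
  simp only [CyclicFlat, Cyclic, isCircuit'_iff]
  grind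

lemma mem_closure_sdiff_singleton_iff (he : e ∈ X) :
    e ∈ M.closure (X \ {e}) ↔ ∃ C ⊆ X, M.IsCircuit C ∧ e ∈ C := by
  rw [mem_closure_iff_exists_isCircuit (by simp), insert_sdiff_singleton, insert_eq_of_mem he]

lemma cyclic_iff_forall_mem_closure_sdiff_singleton :
    M.Cyclic X ↔ ∀ e ∈ X, e ∈ M.closure (X \ {e}) :=
  forall₂_congr fun _ he ↦ (mem_closure_sdiff_singleton_iff he).symm

lemma Cyclic.subset_ground (hX : M.Cyclic X) : X ⊆ M.E := fun e he ↦
  let ⟨_, _, hC, heC⟩ := hX e he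
  hC.subset_ground heC

lemma cyclic_empty (M : Matroid α) : M.Cyclic ∅ := by
  simp [Cyclic]

lemma Cyclic.union (hX : M.Cyclic X) (hY : M.Cyclic Y) : M.Cyclic (X ∪ Y) := by
  rintro e (he | he)
  · obtain ⟨C, hCX, hC, heC⟩ := hX e he
    exact ⟨C, hCX.trans subset_union_left, hC, heC⟩
  · obtain ⟨C, hCY, hC, heC⟩ := hY e he
    exact ⟨C, hCY.trans subset_union_right, hC, heC⟩

lemma Cyclic.closure (hX : M.Cyclic X) : M.Cyclic (M.closure X) := by
  intro e he
  by_cases heX : e ∈ X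
  · obtain ⟨C, hCX, hC, heC⟩ := hX e heX
    exact ⟨C, hCX.trans (M.subset_closure X hX.subset_ground), hC, heC⟩
  · obtain ⟨C, hCX, hC, heC⟩ := exists_isCircuit_of_mem_closure he heX
    exact ⟨C, hCX.trans (insert_subset he (M.subset_closure X hX.subset_ground)), hC, heC⟩

lemma IsFlat.inter (hX : M.IsFlat X) (hY : M.IsFlat Y) : M.IsFlat (X ∩ Y) := by
  refine isFlat_iff_closure_eq.2 (subset_antisymm (subset_inter ?_ ?_)
    (M.subset_closure _ (inter_subset_left.trans hX.subset_ground)))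
  · exact (M.closure_subset_closure inter_subset_left).trans hX.closure.subset
  · exact (M.closure_subset_closure inter_subset_right).trans hY.closure.subset

lemma cyclicPart_subset (M : Matroid α) (X : Set α) : M.cyclicPart X ⊆ X :=
  fun _ ⟨_, hCX, _, heC⟩ ↦ hCX heC

lemma cyclic_cyclicPart (M : Matroid α) (X : Set α) : M.Cyclic (M.cyclicPart X) :=
  fun _ ⟨C, hCX, hC, heC⟩ ↦ ⟨C, fun _ hf ↦ ⟨C, hCX, hC, hf⟩, hC, heC⟩

lemma Cyclic.subset_cyclicPart (hY : M.Cyclic Y) (hYX : Y ⊆ X) : Y ⊆ M.cyclicPart X :=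
  fun e he ↦ let ⟨C, hCY, hC, heC⟩ := hY e he; ⟨C, hCY.trans hYX, hC, heC⟩

lemma notMem_closure_of_mem_sdiff_cyclicPart (he : e ∈ X \ M.cyclicPart X) :
    e ∉ M.closure (X \ {e}) :=
  fun hcl ↦ he.2 ((mem_closure_sdiff_singleton_iff he.1).1 hcl)

lemma IsFlat.isFlat_cyclicPart (hF : M.IsFlat F) : M.IsFlat (M.cyclicPart F) := by
  refine isFlat_iff_closure_eq.2 (subset_antisymm (fun e he ↦ by_contra fun heP ↦ ?_)
    (M.subset_closure _ ((M.cyclicPart_subset F).trans hF.subset_ground)))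
  have heF : e ∈ F := hF.closure.subset (M.closure_subset_closure (M.cyclicPart_subset F) he)
  refine notMem_closure_of_mem_sdiff_cyclicPart ⟨heF, heP⟩
    (M.closure_subset_closure (show M.cyclicPart F ⊆ F \ {e} from
      fun f hf ↦ ⟨M.cyclicPart_subset F hf, ?_⟩) he)
  rintro rfl
  exact heP hf

/-- The elements of `F` outside its cyclic part are coloops of `F`, so they lie in every basis
of `F`. -/
lemma rk_cyclicPart_add_ncard_sdiff_le [M.RankFinite] (hF : F ⊆ M.E) :
    M.rk (M.cyclicPart F) + (F \ M.cyclicPart F).ncard ≤ M.rk F := by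
  obtain ⟨I, hI⟩ := M.exists_isBasis (M.cyclicPart F) ((M.cyclicPart_subset F).trans hF)
  obtain ⟨J, hJ, hIJ⟩ := hI.indep.subset_isBasis_of_subset
    (hI.subset.trans (M.cyclicPart_subset F)) hF
  have hcoloops : F \ M.cyclicPart F ⊆ J := fun e he ↦ by_contra fun heJ ↦
    notMem_closure_of_mem_sdiff_cyclicPart he <| M.closure_subset_closure
      (show J ⊆ F \ {e} from fun f hf ↦ ⟨hJ.subset hf, by rintro rfl; exact heJ hf⟩)
      (hJ.subset_closure he.1)
  rw [hI.isBasis'.rk_eq_ncard, hJ.isBasis'.rk_eq_ncard,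
    ← ncard_union_eq (disjoint_sdiff_right.mono_left hI.subset) hI.indep.finite
      (hJ.indep.finite.subset hcoloops)]
  exact ncard_le_ncard (union_subset hIJ hcoloops) hJ.indep.finite

lemma cyclicFlat_iff_rk [M.RankFinite] : M.CyclicFlat X ↔ X ⊆ M.E ∧
    (∀ e ∈ X, M.rk (X \ {e}) = M.rk X) ∧ ∀ e ∈ M.E \ X, M.rk (insert e X) ≠ M.rk X := by
  rw [cyclicFlat_iff, cyclic_iff_forall_mem_closure_sdiff_singleton]
  refine ⟨fun ⟨hF, hC⟩ ↦ ⟨hF.subset_ground, fun e he ↦ ?_, fun e he ↦ ?_⟩,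
    fun ⟨hXE, hC, hF⟩ ↦ ⟨?_, fun e he ↦ ?_⟩⟩
  · exact (mem_closure_sdiff_singleton_iff_rk_eq he (hF.subset_ground he)).1 (hC e he)
  · rw [Ne, ← mem_closure_iff_rk_insert_eq he.1, hF.closure]
    exact he.2
  · refine isFlat_iff_closure_eq.2 (subset_antisymm (fun e he ↦ by_contra fun heX ↦ ?_)
      (M.subset_closure X hXE))
    exact hF e ⟨mem_ground_of_mem_closure he, heX⟩
      ((mem_closure_iff_rk_insert_eq (mem_ground_of_mem_closure he)).1 he)
  · exact (mem_closure_sdiff_singleton_iff_rk_eq he (hXE he)).2 (hC e he)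

lemma cyclicFlat_loops (M : Matroid α) : M.CyclicFlat M.loops :=
  cyclicFlat_iff.2 ⟨M.isFlat_closure ∅, M.cyclic_empty.closure⟩

lemma CyclicFlat.closure_union (hX : M.CyclicFlat X) (hY : M.CyclicFlat Y) :
    M.CyclicFlat (M.closure (X ∪ Y)) :=
  cyclicFlat_iff.2 ⟨M.isFlat_closure _,
    ((cyclicFlat_iff.1 hX).2.union (cyclicFlat_iff.1 hY).2).closure⟩

lemma IsFlat.cyclicFlat_cyclicPart (hF : M.IsFlat F) : M.CyclicFlat (M.cyclicPart F) :=
  cyclicFlat_iff.2 ⟨hF.isFlat_cyclicPart, M.cyclic_cyclicPart F⟩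

lemma IsFlat.rk_lt_rk_of_ssubset [M.RankFinite] (hX : M.IsFlat X) (hY : Y ⊆ M.E)
    (hXY : X ⊂ Y) : M.rk X < M.rk Y := by
  obtain ⟨e, heY, heX⟩ := exists_of_ssubset hXY
  calc M.rk X < M.rk (insert e X) := by
        rw [rk_insert_eq_add_one ⟨hY heY, by rwa [hX.closure]⟩]
        exact Nat.lt_succ_self _
    _ ≤ M.rk Y := rk_mono (insert_subset heY hXY.subset)

lemma Cyclic.rk_lt_rk_add_ncard_sdiff [M.RankFinite] (hY : M.Cyclic Y) (hYfin : Y.Finite)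
    (hXY : X ⊂ Y) : M.rk Y < M.rk X + (Y \ X).ncard := by
  obtain ⟨e, heY, heX⟩ := exists_of_ssubset hXY
  have hYe : M.rk Y = M.rk (Y \ {e}) := by
    rw [← rk_closure_eq (Y \ {e}), closure_sdiff_singleton_eq_closure
      (cyclic_iff_forall_mem_closure_sdiff_singleton.1 hY e heY), rk_closure_eq]
  have hcard := ncard_sdiff_singleton_add_one (show e ∈ Y \ X from ⟨heY, heX⟩)
    (hYfin.subset sdiff_subset)
  calc M.rk Y = M.rk (Y \ {e}) := hYe
    _ ≤ M.rk (X ∪ (Y \ X) \ {e}) := rk_mono fun x ⟨hxY, hxe⟩ ↦ by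
        by_cases hxX : x ∈ X
        · exact .inl hxX
        · exact .inr ⟨⟨hxY, hxX⟩, hxe⟩
    _ ≤ M.rk X + ((Y \ X) \ {e}).ncard :=
        rk_union_le_rk_add_ncard X ((hYfin.subset sdiff_subset).subset sdiff_subset)
    _ < M.rk X + (Y \ X).ncard := by omega

lemma rk_closure_union_add_rk_cyclicPart_inter_le [M.RankFinite] (hX : X ⊆ M.E) :
    M.rk (M.closure (X ∪ Y)) + M.rk (M.cyclicPart (X ∩ Y)) +
      ((X ∩ Y) \ M.cyclicPart (X ∩ Y)).ncard ≤ M.rk X + M.rk Y := by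
  have := rk_cyclicPart_add_ncard_sdiff_le (M := M) (F := X ∩ Y) (inter_subset_left.trans hX)
  have := M.rk_inter_add_rk_union_le X Y
  rw [rk_closure_eq]
  omega

end Matroid

structure CyclicFlatAxioms {α : Type*} (S : Set α) (Z : Set (Set α)) (r : Set α → ℤ) :
    Prop where
  finite : S.Finite
  subset_ground : ∀ X ∈ Z, X ⊆ S
  nonempty : Z.Nonempty
  exists_join : ∀ X ∈ Z, ∀ Y ∈ Z, ∃ J ∈ Z, X ⊆ J ∧ Y ⊆ J ∧
    ∀ W ∈ Z, X ⊆ W → Y ⊆ W → J ⊆ W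
  exists_meet : ∀ X ∈ Z, ∀ Y ∈ Z, ∃ G ∈ Z, G ⊆ X ∧ G ⊆ Y ∧
    ∀ W ∈ Z, W ⊆ X → W ⊆ Y → W ⊆ G
  r_bot : ∀ B ∈ Z, (∀ X ∈ Z, B ⊆ X) → r B = 0
  r_ssubset : ∀ X ∈ Z, ∀ Y ∈ Z, X ⊂ Y →
    0 < r Y - r X ∧ r Y - r X < ((Y \ X).ncard : ℤ)
  semimodular : ∀ X ∈ Z, ∀ Y ∈ Z, ∀ J ∈ Z, ∀ G ∈ Z,
    (X ⊆ J ∧ Y ⊆ J ∧ ∀ W ∈ Z, X ⊆ W → Y ⊆ W → J ⊆ W) →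
    (G ⊆ X ∧ G ⊆ Y ∧ ∀ W ∈ Z, W ⊆ X → W ⊆ Y → W ⊆ G) →
    r J + r G + (((X ∩ Y) \ G).ncard : ℤ) ≤ r X + r Y

theorem Matroid.cyclicFlatAxioms {α : Type*} {M : Matroid α} [M.Finite] {r : Set α → ℤ}
    (hr : ∀ X, M.CyclicFlat X → (M.rk X : ℤ) = r X) :
    CyclicFlatAxioms M.E {X | M.CyclicFlat X} r where
  finite := M.ground_finite
  subset_ground _ hX := hX.1.subset_ground
  nonempty := ⟨_, M.cyclicFlat_loops⟩
  exists_join X hX Y hY := by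
    have hXY : X ∪ Y ⊆ M.E := union_subset hX.1.subset_ground hY.1.subset_ground
    refine ⟨M.closure (X ∪ Y), hX.closure_union hY,
      subset_union_left.trans (M.subset_closure _ hXY),
      subset_union_right.trans (M.subset_closure _ hXY), fun W hW hXW hYW ↦ ?_⟩
    exact hW.1.closure.subset.trans' (M.closure_subset_closure (union_subset hXW hYW))
  exists_meet X hX Y hY := by
    refine ⟨M.cyclicPart (X ∩ Y), (hX.1.inter hY.1).cyclicFlat_cyclicPart,
      (M.cyclicPart_subset _).trans inter_subset_left,
      (M.cyclicPart_subset _).trans inter_subset_right,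
      fun W hW hWX hWY ↦ (cyclicFlat_iff.1 hW).2.subset_cyclicPart (subset_inter hWX hWY)⟩
  r_bot B hB hBot := by
    rw [← hr B hB, Nat.cast_eq_zero, ← Nat.le_zero, ← M.rk_loops]
    exact rk_mono (hBot _ M.cyclicFlat_loops)
  r_ssubset X hX Y hY hXY := by
    have hlt := hX.1.rk_lt_rk_of_ssubset hY.1.subset_ground hXY
    have hlt' := (cyclicFlat_iff.1 hY).2.rk_lt_rk_add_ncard_sdiff
      (M.ground_finite.subset hY.1.subset_ground) hXY
    rw [← hr X hX, ← hr Y hY]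
    omega
  semimodular X hX Y hY J hJ G hG := by
    rintro ⟨-, -, hJ_le⟩ ⟨hGX, hGY, hG_ge⟩
    have hXY := M.subset_closure (X ∪ Y) (union_subset hX.1.subset_ground hY.1.subset_ground)
    have hJ_sub : J ⊆ M.closure (X ∪ Y) := hJ_le _ (hX.closure_union hY)
      (subset_union_left.trans hXY) (subset_union_right.trans hXY)
    obtain rfl : G = M.cyclicPart (X ∩ Y) := subset_antisymm
      ((cyclicFlat_iff.1 hG).2.subset_cyclicPart (subset_inter hGX hGY))
      (hG_ge _ (hX.1.inter hY.1).cyclicFlat_cyclicPart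
        ((M.cyclicPart_subset _).trans inter_subset_left)
        ((M.cyclicPart_subset _).trans inter_subset_right))
    have := rk_mono (M := M) hJ_sub
    have := rk_closure_union_add_rk_cyclicPart_inter_le (M := M) (Y := Y) hX.1.subset_ground
    rw [← hr X hX, ← hr Y hY, ← hr J hJ, ← hr _ hG]
    omega

structure IsMatroidRankFunction {α : Type*} (E : Set α) (ρ : Set α → ℤ) : Prop where
  finite : E.Finite
  empty : ρ ∅ = 0
  mono : ∀ ⦃A B⦄, A ⊆ B → B ⊆ E → ρ A ≤ ρ B
  union_le : ∀ ⦃A B⦄, A ⊆ E → B ⊆ E → ρ (A ∪ B) ≤ ρ A + B.ncard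
  submod : ∀ ⦃A B⦄, A ⊆ E → B ⊆ E → ρ (A ∪ B) + ρ (A ∩ B) ≤ ρ A + ρ B

namespace IsMatroidRankFunction

variable {α : Type*} {E A I J T X : Set α} {ρ : Set α → ℤ} {e : α}

lemma le_ncard (hρ : IsMatroidRankFunction E ρ) (hA : A ⊆ E) : ρ A ≤ A.ncard := by
  simpa [hρ.empty] using hρ.union_le (empty_subset E) hA

lemma insert_le (hρ : IsMatroidRankFunction E ρ) (hA : A ⊆ E) (he : e ∈ E) :
    ρ (insert e A) ≤ ρ A + 1 := by
  simpa [union_singleton] using hρ.union_le hA (singleton_subset_iff.2 he)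

lemma union_eq_of_forall_insert_eq (hρ : IsMatroidRankFunction E ρ) (hA : A ⊆ E) (hT : T ⊆ E)
    (h : ∀ e ∈ T, ρ (insert e A) = ρ A) : ρ (A ∪ T) = ρ A := by
  induction T, hρ.finite.subset hT using Set.Finite.induction_on_subset with
  | empty => rw [union_empty]
  | @insert a T _ _ _ ih =>
    have hTE : T ⊆ E := (subset_insert a T).trans hT
    have haA : insert a A ⊆ E := insert_subset (hT (mem_insert a T)) hA
    have hsub := hρ.submod (union_subset hA hTE) haA
    rw [show A ∪ T ∪ insert a A = A ∪ insert a T by grind,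
      ih hTE (fun e he ↦ h e (.inr he)), h a (mem_insert a T)] at hsub
    have h₁ := hρ.mono (subset_inter (subset_union_left (t := T)) (subset_insert a A))
      (inter_subset_right.trans haA)
    have h₂ := hρ.mono subset_union_left (union_subset hA hT)
    omega

lemma indep_of_subset (hρ : IsMatroidRankFunction E ρ) (hJ : J ⊆ E ∧ ρ J = J.ncard)
    (hIJ : I ⊆ J) : I ⊆ E ∧ ρ I = I.ncard := by
  have hIE := hIJ.trans hJ.1
  have hunion := hρ.union_le hIE (sdiff_subset.trans hJ.1) (B := J \ I)
  have hcard := ncard_sdiff_add_ncard_of_subset hIJ (hρ.finite.subset hJ.1)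
  rw [union_sdiff_cancel hIJ, hJ.2, ← hcard] at hunion
  have := hρ.le_ncard hIE
  push_cast at hunion
  exact ⟨hIE, by omega⟩

lemma insert_eq_of_not_indep (hρ : IsMatroidRankFunction E ρ) (hI : I ⊆ E ∧ ρ I = I.ncard)
    (he : e ∈ E) (heI : e ∉ I)
    (hnot : ¬ (insert e I ⊆ E ∧ ρ (insert e I) = (insert e I).ncard)) :
    ρ (insert e I) = ρ I := by
  have hcard := ncard_insert_of_notMem heI (hρ.finite.subset hI.1)
  have h₁ := hρ.mono (subset_insert e I) (insert_subset he hI.1)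
  have h₂ := hρ.insert_le hI.1 he
  have h₃ : ρ (insert e I) ≠ (insert e I).ncard :=
    fun h ↦ hnot ⟨insert_subset he hI.1, h⟩
  rw [hcard] at h₃
  push_cast at h₃
  omega

def matroid (hρ : IsMatroidRankFunction E ρ) : Matroid α :=
  (IndepMatroid.ofFinite hρ.finite (fun I ↦ I ⊆ E ∧ ρ I = I.ncard)
    ⟨empty_subset E, by simp [hρ.empty]⟩
    (fun _ _ hJ hIJ ↦ hρ.indep_of_subset hJ hIJ)
    (fun I J hI hJ hlt ↦ by
      by_contra! hcon
      have hspan := hρ.union_eq_of_forall_insert_eq hI.1 (sdiff_subset.trans hJ.1)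
        fun e ⟨heJ, heI⟩ ↦ hρ.insert_eq_of_not_indep hI (hJ.1 heJ) heI
          fun h ↦ hcon e heJ heI h.1 h.2
      have hmono := hρ.mono subset_union_right (union_subset hI.1 hJ.1) (A := J)
      rw [union_sdiff_self, hspan, hI.2, hJ.2] at *
      omega)
    (fun _ hI ↦ hI.1)).matroid

@[simp] lemma matroid_E (hρ : IsMatroidRankFunction E ρ) : hρ.matroid.E = E := rfl

@[simp] lemma matroid_indep_iff (hρ : IsMatroidRankFunction E ρ) :
    hρ.matroid.Indep I ↔ I ⊆ E ∧ ρ I = I.ncard := Iff.rfl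

instance (hρ : IsMatroidRankFunction E ρ) : hρ.matroid.Finite := ⟨hρ.finite⟩

lemma rk_matroid (hρ : IsMatroidRankFunction E ρ) (hA : A ⊆ E) :
    (hρ.matroid.rk A : ℤ) = ρ A := by
  obtain ⟨I, hI⟩ := hρ.matroid.exists_isBasis A hA
  have hIind := hρ.matroid_indep_iff.1 hI.indep
  have hspan := hρ.union_eq_of_forall_insert_eq hIind.1 (sdiff_subset.trans hA)
    fun e ⟨heA, heI⟩ ↦ hρ.insert_eq_of_not_indep hIind (hA heA) heI
      (hI.isBasis'.insert_not_indep ⟨heA, heI⟩)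
  rw [union_sdiff_cancel hI.subset] at hspan
  rw [hI.isBasis'.rk_eq_ncard, hspan, hIind.2]

lemma cyclicFlat_matroid_iff (hρ : IsMatroidRankFunction E ρ) : hρ.matroid.CyclicFlat X ↔
    X ⊆ E ∧ (∀ e ∈ X, ρ (X \ {e}) = ρ X) ∧
      ∀ e ∈ E \ X, ρ (insert e X) ≠ ρ X := by
  rw [Matroid.cyclicFlat_iff_rk, matroid_E]
  refine and_congr_right fun hX ↦ and_congr (forall₂_congr fun e he ↦ ?_)
    (forall₂_congr fun e he ↦ ?_)
  · rw [← hρ.rk_matroid (sdiff_subset.trans hX), ← hρ.rk_matroid hX, Nat.cast_inj]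
  · rw [← hρ.rk_matroid (insert_subset he.1 hX), ← hρ.rk_matroid hX, Ne, Ne, Nat.cast_inj]

end IsMatroidRankFunction

namespace Set

variable {α : Type*} {p q s t u : Set α}

theorem ncard_sdiff_le_ncard_sdiff_add_ncard_sdiff (hs : s.Finite) (ht : t.Finite) :
    (s \ u).ncard ≤ (s \ t).ncard + (t \ u).ncard := by
  refine (ncard_le_ncard (fun x hx ↦ ?_) (hs.sdiff.union ht.sdiff)).trans (ncard_union_le _ _)
  by_cases hxt : x ∈ t
  · exact .inr ⟨hxt, hx.2⟩
  · exact .inl ⟨hx.1, hxt⟩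

theorem ncard_add_ncard_le_of_union_subset_of_inter_subset (hs : s.Finite) (ht : t.Finite)
    (hunion : p ∪ q ⊆ s ∪ t) (hinter : p ∩ q ⊆ s ∩ t) :
    p.ncard + q.ncard ≤ s.ncard + t.ncard := by
  have hp := (hs.union ht).subset (subset_union_left.trans hunion)
  have hq := (hs.union ht).subset (subset_union_right.trans hunion)
  rw [← ncard_union_add_ncard_inter p q hp hq, ← ncard_union_add_ncard_inter s t hs ht]
  exact add_le_add (ncard_le_ncard hunion (hs.union ht))
    (ncard_le_ncard hinter (hs.inter_of_left t))

end Set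

namespace CyclicFlatAxioms

variable {α : Type*} {S A B F G X Y : Set α} {Z : Set (Set α)} {r : Set α → ℤ} {e : α}

lemma finite_family (h : CyclicFlatAxioms S Z r) : Z.Finite :=
  h.finite.finite_subsets.subset h.subset_ground

lemma finite_of_mem (h : CyclicFlatAxioms S Z r) (hX : X ∈ Z) : X.Finite :=
  h.finite.subset (h.subset_ground X hX)

lemma exists_bot (h : CyclicFlatAxioms S Z r) : ∃ B ∈ Z, ∀ X ∈ Z, B ⊆ X := by
  obtain ⟨B, hB, hmin⟩ := h.finite_family.exists_minimal h.nonempty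
  refine ⟨B, hB, fun X hX ↦ ?_⟩
  obtain ⟨G, hG, hGB, hGX, -⟩ := h.exists_meet B hB X hX
  exact (hmin hG hGB).trans hGX

lemma r_le_of_subset (h : CyclicFlatAxioms S Z r) (hX : X ∈ Z) (hY : Y ∈ Z) (hXY : X ⊆ Y) :
    r X ≤ r Y := by
  obtain rfl | hne := eq_or_ne X Y
  · rfl
  · linarith [(h.r_ssubset X hX Y hY (hXY.ssubset_of_ne hne)).1]

lemma r_le_add_ncard_of_subset (h : CyclicFlatAxioms S Z r) (hX : X ∈ Z) (hY : Y ∈ Z)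
    (hXY : X ⊆ Y) : r Y ≤ r X + (Y \ X).ncard := by
  obtain rfl | hne := eq_or_ne X Y
  · simp
  · linarith [(h.r_ssubset X hX Y hY (hXY.ssubset_of_ne hne)).2]

lemma r_nonneg (h : CyclicFlatAxioms S Z r) (hX : X ∈ Z) : 0 ≤ r X := by
  obtain ⟨B, hB, hBot⟩ := h.exists_bot
  rw [← h.r_bot B hB hBot]
  exact h.r_le_of_subset hB hX (hBot X hX)

/-- With `H` and `J` the meet and join of `F` and `G`, (Z2) gives `r F ≤ r H + |F \ H|`, and (Z3)
together with `r F ≤ r J` gives `r H + |(F ∩ G) \ H| ≤ r G`. By (Z2) again, the first step is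
strict if `H ⊂ F` and the second one if `F ⊂ G ⊆ J`. -/
lemma r_lt_add_ncard_sdiff (h : CyclicFlatAxioms S Z r) (hF : F ∈ Z) (hG : G ∈ Z)
    (hFG : F ≠ G) : r F < r G + (F \ G).ncard := by
  obtain ⟨J, hJ, hFJ, hGJ, hJ_le⟩ := h.exists_join F hF G hG
  obtain ⟨H, hH, hHF, hHG, hH_ge⟩ := h.exists_meet F hF G hG
  have hsemi := h.semimodular F hF G hG J hJ H hH ⟨hFJ, hGJ, hJ_le⟩ ⟨hHF, hHG, hH_ge⟩
  have htri := ncard_sdiff_le_ncard_sdiff_add_ncard_sdiff (u := H) (h.finite_of_mem hF)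
    ((h.finite_of_mem hF).inter_of_left G)
  rw [sdiff_self_inter] at htri
  by_cases hFsubG : F ⊆ G
  · have hFJ' := (h.r_ssubset F hF J hJ (hFsubG.ssubset_of_ne hFG |>.trans_subset hGJ)).1
    have := h.r_le_add_ncard_of_subset hH hF hHF
    omega
  · have hHF' : H ⊂ F := hHF.ssubset_of_ne fun hHF ↦ hFsubG (hHF ▸ hHG)
    have := (h.r_ssubset H hH F hF hHF').2
    have := h.r_le_of_subset hF hJ hFJ
    omega

lemma r_le_add_ncard_sdiff (h : CyclicFlatAxioms S Z r) (hF : F ∈ Z) (hG : G ∈ Z) :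
    r F ≤ r G + (F \ G).ncard := by
  obtain rfl | hFG := eq_or_ne F G
  · simp
  · exact (h.r_lt_add_ncard_sdiff hF hG hFG).le

noncomputable def rankOfCyclicFlats (Z : Set (Set α)) (r : Set α → ℤ) (A : Set α) : ℤ :=
  sInf ((fun F ↦ r F + (A \ F).ncard) '' Z)

lemma rankOfCyclicFlats_le (h : CyclicFlatAxioms S Z r) (hF : F ∈ Z) (A : Set α) :
    rankOfCyclicFlats Z r A ≤ r F + (A \ F).ncard :=
  csInf_le (h.finite_family.image _).bddBelow ⟨F, hF, rfl⟩

lemma exists_rankOfCyclicFlats_eq (h : CyclicFlatAxioms S Z r) (A : Set α) :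
    ∃ F ∈ Z, rankOfCyclicFlats Z r A = r F + (A \ F).ncard := by
  obtain ⟨F, hF, hEq⟩ :=
    (h.nonempty.image fun F ↦ r F + ((A \ F).ncard : ℤ)).csInf_mem (h.finite_family.image _)
  exact ⟨F, hF, hEq.symm⟩

lemma rankOfCyclicFlats_of_mem (h : CyclicFlatAxioms S Z r) (hF : F ∈ Z) :
    rankOfCyclicFlats Z r F = r F := by
  refine le_antisymm (by simpa using h.rankOfCyclicFlats_le hF F) ?_
  obtain ⟨G, hG, hEq⟩ := h.exists_rankOfCyclicFlats_eq F
  exact hEq ▸ h.r_le_add_ncard_sdiff hF hG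

lemma rankOfCyclicFlats_mono (h : CyclicFlatAxioms S Z r) (hAB : A ⊆ B) (hB : B ⊆ S) :
    rankOfCyclicFlats Z r A ≤ rankOfCyclicFlats Z r B := by
  obtain ⟨F, hF, hEq⟩ := h.exists_rankOfCyclicFlats_eq B
  have := ncard_le_ncard (sdiff_subset_sdiff_left hAB (t := F)) ((h.finite.subset hB).sdiff)
  have := h.rankOfCyclicFlats_le hF A
  omega

lemma rankOfCyclicFlats_union_le (h : CyclicFlatAxioms S Z r) (hA : A ⊆ S) (hB : B ⊆ S) :
    rankOfCyclicFlats Z r (A ∪ B) ≤ rankOfCyclicFlats Z r A + B.ncard := by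
  obtain ⟨F, hF, hEq⟩ := h.exists_rankOfCyclicFlats_eq A
  have := h.rankOfCyclicFlats_le hF (A ∪ B)
  have := (ncard_le_ncard
    (union_sdiff_distrib.trans_subset (union_subset_union_right _ sdiff_subset))
    ((h.finite.subset hA).sdiff.union (h.finite.subset hB))).trans (ncard_union_le (A \ F) B)
  omega

lemma rankOfCyclicFlats_submod (h : CyclicFlatAxioms S Z r) (hA : A ⊆ S) (hB : B ⊆ S) :
    rankOfCyclicFlats Z r (A ∪ B) + rankOfCyclicFlats Z r (A ∩ B) ≤
      rankOfCyclicFlats Z r A + rankOfCyclicFlats Z r B := by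
  obtain ⟨F, hF, hFA⟩ := h.exists_rankOfCyclicFlats_eq A
  obtain ⟨G, hG, hGB⟩ := h.exists_rankOfCyclicFlats_eq B
  obtain ⟨J, hJ, hFJ, hGJ, hJ_le⟩ := h.exists_join F hF G hG
  obtain ⟨H, hH, hHF, hHG, hH_ge⟩ := h.exists_meet F hF G hG
  have hsemi := h.semimodular F hF G hG J hJ H hH ⟨hFJ, hGJ, hJ_le⟩ ⟨hHF, hHG, hH_ge⟩
  have hAfin := h.finite.subset hA
  have hBfin := h.finite.subset hB
  have hunion : ((A ∪ B) \ J).ncard ≤ ((A ∪ B) \ (F ∪ G)).ncard :=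
    ncard_le_ncard (sdiff_subset_sdiff_right (union_subset hFJ hGJ)) (hAfin.union hBfin).sdiff
  have hinter := ncard_sdiff_le_ncard_sdiff_add_ncard_sdiff (u := H)
    (hAfin.inter_of_left B) ((h.finite_of_mem hF).inter_of_left G)
  have hcount : ((A ∪ B) \ (F ∪ G)).ncard + ((A ∩ B) \ (F ∩ G)).ncard ≤
      (A \ F).ncard + (B \ G).ncard :=
    ncard_add_ncard_le_of_union_subset_of_inter_subset hAfin.sdiff hBfin.sdiff
      (fun x ↦ by simp only [mem_union, mem_sdiff, mem_inter_iff]; tauto)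
      (fun x ↦ by simp only [mem_union, mem_sdiff, mem_inter_iff]; tauto)
  have := h.rankOfCyclicFlats_le hJ (A ∪ B)
  have := h.rankOfCyclicFlats_le hH (A ∩ B)
  omega

lemma isMatroidRankFunction (h : CyclicFlatAxioms S Z r) :
    IsMatroidRankFunction S (rankOfCyclicFlats Z r) where
  finite := h.finite
  empty := by
    obtain ⟨B, hB, hBot⟩ := h.exists_bot
    obtain ⟨F, hF, hEq⟩ := h.exists_rankOfCyclicFlats_eq ∅
    have := h.rankOfCyclicFlats_le hB ∅
    have := h.r_nonneg hF
    simp only [empty_sdiff, ncard_empty, Nat.cast_zero, add_zero, h.r_bot B hB hBot] at *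
    omega
  mono _ _ hAB hB := h.rankOfCyclicFlats_mono hAB hB
  union_le _ _ hA hB := h.rankOfCyclicFlats_union_le hA hB
  submod _ _ hA hB := h.rankOfCyclicFlats_submod hA hB

lemma rankOfCyclicFlats_sdiff_singleton (h : CyclicFlatAxioms S Z r) (hF : F ∈ Z)
    (he : e ∈ F) : rankOfCyclicFlats Z r (F \ {e}) = rankOfCyclicFlats Z r F := by
  refine le_antisymm (h.rankOfCyclicFlats_mono sdiff_subset (h.subset_ground F hF)) ?_
  obtain ⟨G, hG, hEq⟩ := h.exists_rankOfCyclicFlats_eq (F \ {e})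
  rw [hEq, h.rankOfCyclicFlats_of_mem hF]
  obtain rfl | hFG := eq_or_ne F G
  · simp
  · have := h.r_lt_add_ncard_sdiff hF hG hFG
    have : (F \ G).ncard ≤ ((F \ {e}) \ G).ncard + 1 :=
      (ncard_le_ncard (show F \ G ⊆ insert e ((F \ {e}) \ G) from
        fun x hx ↦ by by_cases hxe : x = e <;> simp_all)
        ((h.finite_of_mem hF).sdiff.sdiff.insert e)).trans (ncard_insert_le e _)
    omega

lemma rankOfCyclicFlats_lt_insert (h : CyclicFlatAxioms S Z r) (hF : F ∈ Z) (he : e ∉ F) :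
    rankOfCyclicFlats Z r F < rankOfCyclicFlats Z r (insert e F) := by
  obtain ⟨G, hG, hEq⟩ := h.exists_rankOfCyclicFlats_eq (insert e F)
  rw [hEq, h.rankOfCyclicFlats_of_mem hF]
  by_cases heG : e ∈ G
  · have := h.r_lt_add_ncard_sdiff hF hG (by rintro rfl; exact he heG)
    have := ncard_le_ncard (sdiff_subset_sdiff_left (subset_insert e F) (t := G))
      ((h.finite_of_mem hF).insert e).sdiff
    omega
  · have := h.r_le_add_ncard_sdiff hF hG
    rw [insert_sdiff_of_notMem _ heG, ncard_insert_of_notMem (fun h ↦ he h.1)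
      (h.finite_of_mem hF).sdiff]
    push_cast
    omega

lemma mem_iff_rankOfCyclicFlats (h : CyclicFlatAxioms S Z r) : X ∈ Z ↔ X ⊆ S ∧
    (∀ e ∈ X, rankOfCyclicFlats Z r (X \ {e}) = rankOfCyclicFlats Z r X) ∧
    ∀ e ∈ S \ X, rankOfCyclicFlats Z r (insert e X) ≠ rankOfCyclicFlats Z r X := by
  refine ⟨fun hX ↦ ⟨h.subset_ground X hX,
    fun e he ↦ h.rankOfCyclicFlats_sdiff_singleton hX he,
    fun e he ↦ (h.rankOfCyclicFlats_lt_insert hX he.2).ne'⟩,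
    fun ⟨hXS, hcyc, hflat⟩ ↦ ?_⟩
  obtain ⟨F, hF, hEq⟩ := h.exists_rankOfCyclicFlats_eq X
  have hXF : X ⊆ F := fun e heX ↦ by_contra fun heF ↦ by
    have := h.rankOfCyclicFlats_le hF (X \ {e})
    have : ((X \ {e}) \ F).ncard + 1 = (X \ F).ncard := by
      rw [sdiff_right_comm]
      exact ncard_sdiff_singleton_add_one ⟨heX, heF⟩ (h.finite.subset hXS).sdiff
    have := hcyc e heX
    omega
  have hFX : F ⊆ X := fun e heF ↦ by_contra fun heX ↦ by
    have := h.rankOfCyclicFlats_le hF (insert e X)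
    have := h.rankOfCyclicFlats_mono (subset_insert e X)
      (insert_subset (h.subset_ground F hF heF) hXS)
    rw [insert_sdiff_of_mem _ heF, sdiff_eq_empty.2 hXF] at *
    simp only [ncard_empty, Nat.cast_zero, add_zero] at *
    exact hflat e ⟨h.subset_ground F hF heF, heX⟩ (by omega)
  rwa [hXF.antisymm hFX]

theorem exists_matroid (h : CyclicFlatAxioms S Z r) : ∃ M : Matroid α, M.E = S ∧
    {X | M.CyclicFlat X} = Z ∧ ∀ X ∈ Z, (M.rk X : ℤ) = r X :=
  ⟨h.isMatroidRankFunction.matroid, rfl, Set.ext fun _ ↦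
    h.isMatroidRankFunction.cyclicFlat_matroid_iff.trans h.mem_iff_rankOfCyclicFlats.symm,
    fun X hX ↦ (h.isMatroidRankFunction.rk_matroid (h.subset_ground X hX)).trans
      (h.rankOfCyclicFlats_of_mem hX)⟩

end CyclicFlatAxioms

/-- Axiom scheme for cyclic flats: for a finite set `S`, a collection `Z` of subsets of `S`,
and `r : Z → ℤ`, there is a matroid on `S` whose cyclic flats are exactly the members of `Z`
and whose rank function restricted to `Z` is `r`, iff (Z0) `Z` is a lattice under inclusion,
(Z1) `r 0_Z = 0`, (Z2) `0 < r Y - r X < |Y \ X|` whenever `X ⊊ Y` in `Z`, and (Z3) the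
specialized semimodular inequality holds. -/
theorem matroid_cyclicFlat_axioms {α : Type*} (S : Set α) (hS : S.Finite)
    (Z : Set (Set α)) (hZS : ∀ X ∈ Z, X ⊆ S) (r : Set α → ℤ) :
    (∃ M : Matroid α, M.E = S ∧ {X : Set α | M.CyclicFlat X} = Z ∧
        ∀ X ∈ Z, (M.rk X : ℤ) = r X) ↔
      (Z.Nonempty ∧
        (∀ X ∈ Z, ∀ Y ∈ Z, ∃ J ∈ Z, X ⊆ J ∧ Y ⊆ J ∧
          ∀ W ∈ Z, X ⊆ W → Y ⊆ W → J ⊆ W) ∧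
        (∀ X ∈ Z, ∀ Y ∈ Z, ∃ G ∈ Z, G ⊆ X ∧ G ⊆ Y ∧
          ∀ W ∈ Z, W ⊆ X → W ⊆ Y → W ⊆ G) ∧
        (∀ B ∈ Z, (∀ X ∈ Z, B ⊆ X) → r B = 0) ∧
        (∀ X ∈ Z, ∀ Y ∈ Z, X ⊂ Y →
          0 < r Y - r X ∧ r Y - r X < ((Y \ X).ncard : ℤ)) ∧
        (∀ X ∈ Z, ∀ Y ∈ Z, ∀ J ∈ Z, ∀ G ∈ Z,
          (X ⊆ J ∧ Y ⊆ J ∧ ∀ W ∈ Z, X ⊆ W → Y ⊆ W → J ⊆ W) →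
          (G ⊆ X ∧ G ⊆ Y ∧ ∀ W ∈ Z, W ⊆ X → W ⊆ Y → W ⊆ G) →
          r J + r G + (((X ∩ Y) \ G).ncard : ℤ) ≤ r X + r Y)) := by
  constructor
  · rintro ⟨M, rfl, rfl, hr⟩
    have : M.Finite := ⟨hS⟩
    obtain ⟨-, -, hne, hjoin, hmeet, hbot, hssubset, hsemi⟩ := M.cyclicFlatAxioms hr
    exact ⟨hne, hjoin, hmeet, hbot, hssubset, hsemi⟩
  · rintro ⟨hne, hjoin, hmeet, hbot, hssubset, hsemi⟩
    exact CyclicFlatAxioms.exists_matroid ⟨hS, hZS, hne, hjoin, hmeet, hbot, hssubset, hsemi⟩
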